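/- arXiv:1702.05575 — 4 statements merged into one kernel-verified Lean document; each statement's English description precedes it below -/
import Mathlib

section
/- Let f₁, f₂ : K → ℝ be bounded measurable functions on a compact set K ⊆ ℝ^d with sup_{x∈K} |f₁(x) − f₂(x)| ≤ ν, and define μ_f(A) := (∫_A e^{−f})/(∫_K e^{−f}). Then for every measurable subset A ⊆ K and every ε > 0, (μ_{f₁}(A_ε) − μ_{f₁}(A)) / μ_{f₁}(A) ≥ e^{−2ν} · (μ_{f₂}(A_ε) − μ_{f₂}(A)) / μ_{f₂}(A), where A_ε := {x ∈ K : dist(x, A) ≤ ε}, provided μ_{f₁}(A) > 0 and μ_{f₂}(A) > 0. -/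
open MeasureTheory Real Metric

/-!
The normalising constants cancel in the relative boundary mass:
`(μ_f(A_ε) - μ_f(A)) / μ_f(A) = ∫_{A_ε \ A} e^{-f} / ∫_A e^{-f}`.
Since `e^{-f₁} ≤ e^ν e^{-f₂}` and `e^{-f₂} ≤ e^ν e^{-f₁}` on `K`, passing from `f₂` to `f₁`
shrinks the numerator and inflates the denominator by a factor of at most `e^ν` each.
-/

/-- The function-induced probability measure `μ_f(A) = (∫_A e^{-f}) / (∫_K e^{-f})`. -/
noncomputable def muF {d : ℕ} (K : Set (EuclideanSpace ℝ (Fin d)))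
    (f : EuclideanSpace ℝ (Fin d) → ℝ) (A : Set (EuclideanSpace ℝ (Fin d))) : ℝ :=
  (∫ x in A, Real.exp (-(f x))) / (∫ x in K, Real.exp (-(f x)))

/-- The `ε`-enlargement of `A` inside `K`. -/
def enlarge {d : ℕ} (K A : Set (EuclideanSpace ℝ (Fin d))) (ε : ℝ) :
    Set (EuclideanSpace ℝ (Fin d)) :=
  {x ∈ K | Metric.infDist x A ≤ ε}

lemma mul_div_le_div_of_le_mul {a₁ a₂ b₁ b₂ c : ℝ} (ha₁ : 0 < a₁) (ha₂ : 0 < a₂) (hb₂ : 0 ≤ b₂)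
    (ha : a₁ ≤ c * a₂) (hb : b₂ ≤ c * b₁) :
    (c ^ 2)⁻¹ * (b₂ / a₂) ≤ b₁ / a₁ := by
  have hc : 0 < c := pos_of_mul_pos_left (ha₁.trans_le ha) ha₂.le
  rw [mul_div_assoc', div_le_div_iff₀ (by positivity) ha₁, mul_assoc,
    inv_mul_le_iff₀ (by positivity)]
  calc b₂ * a₁ ≤ (c * b₁) * (c * a₂) := mul_le_mul hb ha ha₁.le (hb₂.trans hb)
    _ = c ^ 2 * (b₁ * a₂) := by ring

lemma setIntegral_exp_neg_le_exp_mul {α : Type*} [MeasurableSpace α] {μ : Measure α}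
    {s : Set α} {f g : α → ℝ} {ν : ℝ} (hs : MeasurableSet s)
    (hg : IntegrableOn (fun x => exp (-g x)) s μ) (hfg : ∀ x ∈ s, g x ≤ f x + ν) :
    ∫ x in s, exp (-f x) ∂μ ≤ exp ν * ∫ x in s, exp (-g x) ∂μ := by
  rw [← integral_const_mul]
  refine integral_mono_of_nonneg (ae_of_all _ fun x => (exp_pos _).le) (hg.const_mul _) ?_
  filter_upwards [ae_restrict_mem hs] with x hx
  rw [← exp_add, exp_le_exp]
  linarith [hfg x hx]

section EuclideanSpace

variable {d : ℕ} {K A : Set (EuclideanSpace ℝ (Fin d))} {f : EuclideanSpace ℝ (Fin d) → ℝ}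

lemma enlarge_subset (ε : ℝ) : enlarge K A ε ⊆ K := fun _ hx => hx.1

lemma subset_enlarge {ε : ℝ} (hAK : A ⊆ K) (hε : 0 ≤ ε) : A ⊆ enlarge K A ε :=
  fun x hx => ⟨hAK hx, by rwa [infDist_zero_of_mem hx]⟩

lemma measurableSet_enlarge (hK : MeasurableSet K) (ε : ℝ) : MeasurableSet (enlarge K A ε) :=
  hK.inter (measurableSet_le (continuous_infDist_pt A).measurable measurable_const)

lemma setIntegral_exp_neg_pos_of_muF_pos (h : 0 < muF K f A) :
    0 < ∫ x in A, exp (-f x) ∧ 0 < ∫ x in K, exp (-f x) := by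
  have hK : 0 ≤ ∫ x in K, exp (-f x) := integral_nonneg fun _ => (exp_pos _).le
  obtain ⟨hA, hK⟩ | ⟨-, hK'⟩ := div_pos_iff.1 h
  · exact ⟨hA, hK⟩
  · exact absurd hK' hK.not_gt

/-- A nonzero Bochner integral forces integrability, so `μ_f(A) > 0` alone makes `e^{-f}`
integrable on `K`. -/
lemma integrableOn_exp_neg_of_muF_pos (h : 0 < muF K f A) :
    IntegrableOn (fun x => exp (-f x)) K :=
  Integrable.of_integral_ne_zero (setIntegral_exp_neg_pos_of_muF_pos h).2.ne'

lemma muF_sub_div_muF {E : Set (EuclideanSpace ℝ (Fin d))} (hK : ∫ x in K, exp (-f x) ≠ 0)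
    (hA : MeasurableSet A) (hAE : A ⊆ E) (hE : IntegrableOn (fun x => exp (-f x)) E) :
    (muF K f E - muF K f A) / muF K f A =
      (∫ x in E \ A, exp (-f x)) / ∫ x in A, exp (-f x) := by
  rw [muF, muF, div_sub_div_same, ← setIntegral_sdiff hA hE hAE, div_div_div_cancel_right₀ hK]

end EuclideanSpace

theorem cheeger_ratio_stability_general
    {d : ℕ} (K A : Set (EuclideanSpace ℝ (Fin d)))
    (f₁ f₂ : EuclideanSpace ℝ (Fin d) → ℝ) (ν ε : ℝ)
    (hKc : IsCompact K) (hA : MeasurableSet A) (hAK : A ⊆ K)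
    (hν : ∀ x ∈ K, |f₁ x - f₂ x| ≤ ν)
    (hε : 0 < ε)
    (h₁ : 0 < muF K f₁ A) (h₂ : 0 < muF K f₂ A) :
    (muF K f₁ (enlarge K A ε) - muF K f₁ A) / muF K f₁ A
      ≥ Real.exp (-(2 * ν)) *
        ((muF K f₂ (enlarge K A ε) - muF K f₂ A) / muF K f₂ A) := by
  obtain ⟨hA₁, hK₁⟩ := setIntegral_exp_neg_pos_of_muF_pos h₁
  obtain ⟨hA₂, hK₂⟩ := setIntegral_exp_neg_pos_of_muF_pos h₂
  have hi₁ := integrableOn_exp_neg_of_muF_pos h₁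
  have hi₂ := integrableOn_exp_neg_of_muF_pos h₂
  have hEK := enlarge_subset (K := K) (A := A) ε
  have hAE := subset_enlarge hAK hε.le
  have hEA : MeasurableSet (enlarge K A ε \ A) :=
    (measurableSet_enlarge hKc.isClosed.measurableSet ε).diff hA
  rw [muF_sub_div_muF hK₁.ne' hA hAE (hi₁.mono_set hEK),
    muF_sub_div_muF hK₂.ne' hA hAE (hi₂.mono_set hEK),
    show exp (-(2 * ν)) = (exp ν ^ 2)⁻¹ by rw [exp_neg, ← exp_nat_mul]; norm_num]
  refine mul_div_le_div_of_le_mul hA₁ hA₂ (integral_nonneg fun _ => (exp_pos _).le) ?_ ?_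
  · refine setIntegral_exp_neg_le_exp_mul hA (hi₂.mono_set (hAE.trans hEK)) fun x hx => ?_
    linarith [(abs_le.1 (hν x (hAK hx))).1]
  · refine setIntegral_exp_neg_le_exp_mul hEA (hi₁.mono_set (Set.sdiff_subset.trans hEK))
      fun x hx => ?_
    linarith [(abs_le.1 (hν x (hEK hx.1))).2]

theorem cheeger_ratio_stability
    {d : ℕ} (K A : Set (EuclideanSpace ℝ (Fin d)))
    (f₁ f₂ : EuclideanSpace ℝ (Fin d) → ℝ) (ν ε : ℝ)
    (hKc : IsCompact K) (hA : MeasurableSet A) (hAK : A ⊆ K)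
    (hf₁ : Measurable f₁) (hf₂ : Measurable f₂)
    (hb₁ : ∃ B, ∀ x ∈ K, |f₁ x| ≤ B) (hb₂ : ∃ B, ∀ x ∈ K, |f₂ x| ≤ B)
    (hν : ∀ x ∈ K, |f₁ x - f₂ x| ≤ ν)
    (hε : 0 < ε)
    (h₁ : 0 < muF K f₁ A) (h₂ : 0 < muF K f₂ A) :
    (muF K f₁ (enlarge K A ε) - muF K f₁ A) / muF K f₁ A
      ≥ Real.exp (-(2 * ν)) *
        ((muF K f₂ (enlarge K A ε) - muF K f₂ A) / muF K f₂ A) :=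
  cheeger_ratio_stability_general K A f₁ f₂ ν ε hKc hA hAK hν hε h₁ h₂
end

section
/- Let ℓ : ℝ^d × 𝒜 → [0, B] be a measurable loss bounded in [0, B], let f(x) := (1/n) Σᵢ ℓ(x; aᵢ), let z ∼ N(0, σ² I_d), and define g(x) := (z/σ²)(ℓ(x+z; a) − ℓ(x; a)) where a is drawn uniformly from {a₁,…,a_n} independently of z. Then for any fixed x ∈ ℝ^d and any u ∈ ℝ^d with ‖u‖₂ ≤ σ/(2B), E[e^{⟨u, g(x)⟩²}] ≤ e^{(2B/σ)² ‖u‖₂²}. -/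
/-!
Since `ℓ` takes values in `[0, B]`, the squared projection `⟨u, g(x)⟩²` is at most
`(B / σ²)² ⟨u, z⟩²`, and this bound no longer depends on the sampled index. Under
`z ∼ N(0, σ² I)` the projection `⟨u, z⟩` is `N(0, σ² ‖u‖²)`, and for `W ∼ N(0, v)` with
`s v < 1/2` one has `E[exp (s W²)] = 1 / √(1 - 2 s v)`, which is at most `exp (4 s v)` once
`s v ≤ 1/4`. The hypothesis on `‖u‖` is exactly `(B / σ²)² σ² ‖u‖² ≤ 1/4`.
-/

open MeasureTheory ProbabilityTheory Real
open scoped NNReal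

lemma Real.inv_sqrt_one_sub_two_mul_le_exp {c : ℝ} (hc₀ : 0 ≤ c) (hc : c ≤ 1 / 4) :
    (√(1 - 2 * c))⁻¹ ≤ rexp (4 * c) := by
  have hpos : 0 < 1 - 2 * c := by linarith
  have hsq : (1 - 2 * c)⁻¹ ≤ rexp (4 * c) ^ 2 :=
    calc (1 - 2 * c)⁻¹ ≤ 8 * c + 1 := by
          rw [inv_le_iff_one_le_mul₀ hpos]
          nlinarith
      _ ≤ rexp (8 * c) := add_one_le_exp _
      _ = rexp (4 * c) ^ 2 := by rw [sq, ← exp_add]; congr 1; ring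
  calc (√(1 - 2 * c))⁻¹ = √((1 - 2 * c)⁻¹) := (sqrt_inv _).symm
    _ ≤ √(rexp (4 * c) ^ 2) := sqrt_le_sqrt hsq
    _ = rexp (4 * c) := sqrt_sq (exp_nonneg _)

lemma sq_mul_sub_le_of_mem_Icc {a b B : ℝ} (ha : a ∈ Set.Icc 0 B) (hb : b ∈ Set.Icc 0 B)
    (t : ℝ) : (t * (a - b)) ^ 2 ≤ B ^ 2 * t ^ 2 := by
  have hab : (a - b) ^ 2 ≤ B ^ 2 := by nlinarith [ha.1, ha.2, hb.1, hb.2]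
  rw [mul_pow, mul_comm]
  exact mul_le_mul_of_nonneg_right hab (sq_nonneg t)

namespace ProbabilityTheory

lemma map_pi_gaussianReal_sum {ι : Type*} [Fintype ι] (m : ι → ℝ) (v : ι → ℝ≥0) :
    (Measure.pi fun i => gaussianReal (m i) (v i)).map (fun z => ∑ i, z i)
      = gaussianReal (∑ i, m i) (∑ i, v i) := by
  refine Measure.ext_of_charFun ?_
  ext t
  simp_rw [charFun_map_sum_pi_eq_prod, Finset.prod_apply, charFun_gaussianReal,
    ← Complex.exp_sum]
  push_cast
  simp only [Finset.sum_sub_distrib, Finset.mul_sum, Finset.sum_mul, Finset.sum_div]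

lemma map_pi_gaussianReal_weightedSum {ι : Type*} [Fintype ι] (v : ℝ≥0) (u : ι → ℝ) :
    (Measure.pi fun _ : ι => gaussianReal 0 v).map (fun z => ∑ i, u i * z i)
      = gaussianReal 0 ((∑ i, u i ^ 2).toNNReal * v) := by
  calc (Measure.pi fun _ : ι => gaussianReal 0 v).map (fun z => ∑ i, u i * z i)
      = ((Measure.pi fun _ : ι => gaussianReal 0 v).map fun z i => u i * z i).map
          fun z => ∑ i, z i := by
        rw [Measure.map_map (by fun_prop) (by fun_prop)]
        rfl
    _ = (Measure.pi fun i => (gaussianReal 0 v).map (u i * ·)).map fun z => ∑ i, z i := by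
        rw [Measure.pi_map_pi fun i => (measurable_const_mul (u i)).aemeasurable]
    _ = gaussianReal 0 ((∑ i, u i ^ 2).toNNReal * v) := by
        simp_rw [gaussianReal_map_const_mul, mul_zero, map_pi_gaussianReal_sum,
          Finset.sum_const_zero, ← Finset.sum_mul]
        congr
        ext
        simp [Real.coe_toNNReal _ (Finset.sum_nonneg fun i _ => sq_nonneg (u i))]

lemma gaussianPDFReal_zero_mul_exp_mul_sq {v : ℝ≥0} (hv : v ≠ 0) (s x : ℝ) :
    gaussianPDFReal 0 v x * rexp (s * x ^ 2)
      = (√(2 * π * v))⁻¹ * rexp (-((1 - 2 * s * v) / (2 * v)) * x ^ 2) := by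
  have hv' : (v : ℝ) ≠ 0 := by exact_mod_cast hv
  rw [gaussianPDFReal, sub_zero, mul_assoc, ← Real.exp_add]
  congr 2
  field_simp
  ring

lemma integrable_exp_mul_sq_gaussianReal {s : ℝ} {v : ℝ≥0} (hs : 2 * s * v < 1) :
    Integrable (fun x => rexp (s * x ^ 2)) (gaussianReal 0 v) := by
  rcases eq_or_ne v 0 with rfl | hv
  · rw [gaussianReal_zero_var]
    exact integrable_dirac (by simp)
  rw [gaussianReal_of_var_ne_zero 0 hv,
    integrable_withDensity_iff_integrable_smul' (measurable_gaussianPDF 0 v)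
      (ae_of_all _ fun _ => gaussianPDF_lt_top)]
  simp_rw [toReal_gaussianPDF, smul_eq_mul, gaussianPDFReal_zero_mul_exp_mul_sq hv]
  exact (integrable_exp_neg_mul_sq (by positivity)).const_mul _

lemma integral_exp_mul_sq_gaussianReal {s : ℝ} {v : ℝ≥0} (hs : 2 * s * v < 1) :
    ∫ x, rexp (s * x ^ 2) ∂gaussianReal 0 v = (√(1 - 2 * s * v))⁻¹ := by
  rcases eq_or_ne v 0 with rfl | hv
  · simp
  have hs' : 0 < 1 - 2 * s * v := by linarith
  rw [integral_gaussianReal_eq_integral_smul hv]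
  simp_rw [smul_eq_mul, gaussianPDFReal_zero_mul_exp_mul_sq hv, integral_const_mul,
    integral_gaussian, div_div_eq_mul_div, Real.sqrt_div' _ hs'.le]
  rw [show π * (2 * v) = 2 * π * v by ring]
  field_simp

lemma integral_exp_mul_sq_gaussianReal_le {s : ℝ} {v : ℝ≥0} (hs₀ : 0 ≤ s)
    (hs : s * v ≤ 1 / 4) :
    ∫ x, rexp (s * x ^ 2) ∂gaussianReal 0 v ≤ rexp (4 * (s * v)) := by
  rw [integral_exp_mul_sq_gaussianReal (by linarith), mul_assoc]
  exact inv_sqrt_one_sub_two_mul_le_exp (by positivity) hs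

section WeightedSum

variable {ι : Type*} [Fintype ι] (v : ℝ≥0) (u : ι → ℝ) {s : ℝ}

lemma coe_toNNReal_sum_sq_mul :
    (((∑ i, u i ^ 2).toNNReal * v : ℝ≥0) : ℝ) = (∑ i, u i ^ 2) * v := by
  rw [NNReal.coe_mul, Real.coe_toNNReal _ (Finset.sum_nonneg fun i _ => sq_nonneg (u i))]

lemma integrable_exp_mul_sq_weightedSum_pi_gaussianReal
    (hs : 2 * s * ((∑ i, u i ^ 2) * v) < 1) :
    Integrable (fun z => rexp (s * (∑ i, u i * z i) ^ 2))
      (Measure.pi fun _ : ι => gaussianReal 0 v) := by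
  have hL : Measurable fun z : ι → ℝ => ∑ i, u i * z i :=
    Finset.measurable_sum _ fun i _ => by fun_prop
  have h := integrable_exp_mul_sq_gaussianReal (s := s) (v := (∑ i, u i ^ 2).toNNReal * v)
    (by rwa [coe_toNNReal_sum_sq_mul])
  rwa [← map_pi_gaussianReal_weightedSum, integrable_map_measure (by fun_prop)
    hL.aemeasurable] at h

lemma integral_exp_mul_sq_weightedSum_pi_gaussianReal_le (hs₀ : 0 ≤ s)
    (hs : s * ((∑ i, u i ^ 2) * v) ≤ 1 / 4) :
    ∫ z, rexp (s * (∑ i, u i * z i) ^ 2) ∂(Measure.pi fun _ : ι => gaussianReal 0 v)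
      ≤ rexp (4 * (s * ((∑ i, u i ^ 2) * v))) := by
  have hL : Measurable fun z : ι → ℝ => ∑ i, u i * z i :=
    Finset.measurable_sum _ fun i _ => by fun_prop
  rw [← integral_map (f := fun w => rexp (s * w ^ 2)) hL.aemeasurable (by fun_prop),
    map_pi_gaussianReal_weightedSum, ← coe_toNNReal_sum_sq_mul]
  rw [← coe_toNNReal_sum_sq_mul] at hs
  exact integral_exp_mul_sq_gaussianReal_le hs₀ hs

end WeightedSum

end ProbabilityTheory

theorem smoothed_stochastic_gradient_subexponential_general
    {d n : ℕ} [NeZero n] {𝒜 : Type*}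
    (ℓ : (Fin d → ℝ) → 𝒜 → ℝ) (B σ : ℝ) (hB : 0 < B) (hσ : 0 < σ)
    (hℓ : ∀ (v : Fin d → ℝ) (α : 𝒜), ℓ v α ∈ Set.Icc 0 B)
    (a : Fin n → 𝒜)
    (x u : Fin d → ℝ) (hu : Real.sqrt (∑ i, u i ^ 2) ≤ σ / (2 * B)) :
    (∫ p : (Fin d → ℝ) × Fin n,
        Real.exp (((∑ i, u i * p.1 i) / σ ^ 2 *
          (ℓ (x + p.1) (a p.2) - ℓ x (a p.2))) ^ 2)
      ∂((Measure.pi fun _ : Fin d => gaussianReal 0 (σ ^ 2).toNNReal).prod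
          (PMF.uniformOfFintype (Fin n)).toMeasure))
      ≤ Real.exp ((2 * B / σ) ^ 2 * (∑ i, u i ^ 2)) := by
  have hv : (((σ ^ 2).toNNReal : ℝ≥0) : ℝ) = σ ^ 2 := Real.coe_toNNReal _ (sq_nonneg σ)
  have hsum : ∑ i, u i ^ 2 ≤ (σ / (2 * B)) ^ 2 := by
    rw [← sq_sqrt (Finset.sum_nonneg fun i _ => sq_nonneg (u i))]
    gcongr
  have hcv : (B / σ ^ 2) ^ 2 * ((∑ i, u i ^ 2) * (σ ^ 2).toNNReal) ≤ 1 / 4 := by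
    calc _ ≤ (B / σ ^ 2) ^ 2 * ((σ / (2 * B)) ^ 2 * σ ^ 2) := by rw [hv]; gcongr
      _ = 1 / 4 := by field_simp; ring
  calc _ ≤ ∫ p : (Fin d → ℝ) × Fin n, rexp ((B / σ ^ 2) ^ 2 * (∑ i, u i * p.1 i) ^ 2)
          ∂((Measure.pi fun _ : Fin d => gaussianReal 0 (σ ^ 2).toNNReal).prod
            (PMF.uniformOfFintype (Fin n)).toMeasure) := by
        refine integral_mono_of_nonneg (ae_of_all _ fun _ => (exp_pos _).le)
          ((integrable_exp_mul_sq_weightedSum_pi_gaussianReal _ u (by linarith)).comp_fst _)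
          (ae_of_all _ fun p => exp_le_exp.2 ?_)
        convert sq_mul_sub_le_of_mem_Icc (hℓ (x + p.1) (a p.2)) (hℓ x (a p.2)) _ using 1
        ring
    _ = ∫ z, rexp ((B / σ ^ 2) ^ 2 * (∑ i, u i * z i) ^ 2)
          ∂(Measure.pi fun _ : Fin d => gaussianReal 0 (σ ^ 2).toNNReal) := by
        rw [integral_fun_fst fun z : Fin d → ℝ => rexp ((B / σ ^ 2) ^ 2 * (∑ i, u i * z i) ^ 2)]
        simp
    _ ≤ rexp (4 * ((B / σ ^ 2) ^ 2 * ((∑ i, u i ^ 2) * (σ ^ 2).toNNReal))) :=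
        integral_exp_mul_sq_weightedSum_pi_gaussianReal_le _ u (by positivity) hcv
    _ = rexp ((2 * B / σ) ^ 2 * (∑ i, u i ^ 2)) := by
        rw [hv]
        congr 1
        field_simp
        ring

theorem smoothed_stochastic_gradient_subexponential
    {d n : ℕ} [NeZero n] {𝒜 : Type*} [MeasurableSpace 𝒜]
    (ℓ : (Fin d → ℝ) → 𝒜 → ℝ) (B σ : ℝ) (hB : 0 < B) (hσ : 0 < σ)
    (hℓm : ∀ α : 𝒜, Measurable (fun v => ℓ v α))
    (hℓ : ∀ (v : Fin d → ℝ) (α : 𝒜), ℓ v α ∈ Set.Icc 0 B)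
    (a : Fin n → 𝒜)
    (x u : Fin d → ℝ) (hu : Real.sqrt (∑ i, u i ^ 2) ≤ σ / (2 * B)) :
    (∫ p : (Fin d → ℝ) × Fin n,
        Real.exp (((∑ i, u i * p.1 i) / σ ^ 2 *
          (ℓ (x + p.1) (a p.2) - ℓ x (a p.2))) ^ 2)
      ∂((Measure.pi fun _ : Fin d => gaussianReal 0 (σ ^ 2).toNNReal).prod
          (PMF.uniformOfFintype (Fin n)).toMeasure))
      ≤ Real.exp ((2 * B / σ) ^ 2 * (∑ i, u i ^ 2)) :=
  smoothed_stochastic_gradient_subexponential_general ℓ B σ hB hσ hℓ a x u hu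
end

section
/- Let F : ℝ^d → [0, B] be bounded, and suppose F is G-Lipschitz on K̄ := {x : dist(x, K) ≤ ρ} for a set K ⊆ ℝ^d and ρ > 0. Define F̃(x) := E_z[F(x + z)] with z ∼ N(0, σ² I_d). Then for every x ∈ K, |F̃(x) − F(x)| ≤ max{G, B/ρ} · σ · √d. (In fact |F̃(x) − F(x)| ≤ max{G, B/ρ} · E[‖z‖₂] ≤ max{G, B/ρ} · σ√d.) -/
open MeasureTheory ProbabilityTheory Metric

/-- The standard Gaussian measure `N(0, σ² I_d)` on `ℝ^d`. -/
noncomputable def gaussMeasure (d : ℕ) (σ : ℝ) :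
    Measure (EuclideanSpace ℝ (Fin d)) :=
  (Measure.pi fun _ : Fin d => gaussianReal 0 (σ ^ 2).toNNReal).map
    (MeasurableEquiv.toLp 2 (Fin d → ℝ))

/-!
For `x ∈ K` the increment `|F (x + z) - F x|` is at most `G ‖z‖` when `x + z` stays within `ρ`
of `K`, and at most `B ≤ (B / ρ) ‖z‖` otherwise, because then `‖z‖ ≥ ρ`. Averaging over `z`
bounds the smoothing error by `max G (B / ρ) · E ‖z‖`, and `E ‖z‖ ≤ √(E ‖z‖²) = σ √d`.
-/

open scoped NNReal

lemma abs_sub_le_max_mul_dist {E : Type*} [PseudoMetricSpace E] {F : E → ℝ} {K : Set E}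
    {B G ρ : ℝ} {x : E} (hx : x ∈ K) (hρ : 0 < ρ) (hbound : ∀ y, |F y - F x| ≤ B)
    (hLip : ∀ y, infDist y K ≤ ρ → |F y - F x| ≤ G * dist y x) (y : E) :
    |F y - F x| ≤ max G (B / ρ) * dist y x := by
  by_cases hy : infDist y K ≤ ρ
  · exact (hLip y hy).trans (by gcongr; exact le_max_left _ _)
  · have hρy : ρ ≤ dist y x := by
      have := infDist_le_infDist_add_dist (s := K) (x := y) (y := x)
      rw [infDist_zero_of_mem hx] at this
      linarith
    have hB : 0 ≤ B := by simpa using hbound x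
    calc |F y - F x| ≤ B := hbound y
      _ = B / ρ * ρ := (div_mul_cancel₀ B hρ.ne').symm
      _ ≤ max G (B / ρ) * dist y x := by gcongr; exact le_max_right _ _

lemma abs_integral_sub_le_integral_of_abs_sub_le {α : Type*} [MeasurableSpace α]
    {μ : Measure α} [IsProbabilityMeasure μ] {f g : α → ℝ} {c : ℝ}
    (hf : Integrable f μ) (hg : Integrable g μ) (h : ∀ z, |f z - c| ≤ g z) :
    |∫ z, f z ∂μ - c| ≤ ∫ z, g z ∂μ :=
  calc |∫ z, f z ∂μ - c| = |∫ z, (f z - c) ∂μ| := by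
        rw [integral_sub hf (integrable_const c), integral_const, probReal_univ, one_smul]
    _ ≤ ∫ z, |f z - c| ∂μ := abs_integral_le_integral_abs
    _ ≤ ∫ z, g z ∂μ := integral_mono (hf.sub (integrable_const c)).abs hg h

lemma integral_le_sqrt_integral_sq {α : Type*} [MeasurableSpace α]
    {μ : Measure α} [IsProbabilityMeasure μ] {f : α → ℝ} (hf : MemLp f 2 μ) :
    ∫ z, f z ∂μ ≤ √(∫ z, f z ^ 2 ∂μ) := by
  have hvar := variance_nonneg f μ
  rw [variance_eq_sub hf] at hvar
  exact (le_abs_self _).trans (Real.abs_le_sqrt (by simpa using hvar))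

lemma integral_sq_gaussianReal_zero (v : ℝ≥0) : ∫ t, t ^ 2 ∂gaussianReal 0 v = v := by
  rw [← variance_fun_id_gaussianReal (μ := 0) (v := v),
    variance_of_integral_eq_zero aemeasurable_id' integral_id_gaussianReal]

lemma integrable_eval_sq_pi_gaussianReal {ι : Type*} [Fintype ι] (v : ℝ≥0) (i : ι) :
    Integrable (fun y : ι → ℝ => y i ^ 2) (Measure.pi fun _ => gaussianReal 0 v) :=
  ((measurePreserving_eval _ i).integrable_comp (g := fun t : ℝ => t ^ 2) (by fun_prop)).mpr
    (memLp_id_gaussianReal 2).integrable_sq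

lemma integral_eval_sq_pi_gaussianReal {ι : Type*} [Fintype ι] (v : ℝ≥0) (i : ι) :
    ∫ y : ι → ℝ, y i ^ 2 ∂Measure.pi (fun _ => gaussianReal 0 v) = v := by
  have heval := measurePreserving_eval (fun _ : ι => gaussianReal 0 v) i
  rw [← integral_map (f := fun t : ℝ => t ^ 2) heval.measurable.aemeasurable (by fun_prop),
    heval.map_eq, integral_sq_gaussianReal_zero]

instance isProbabilityMeasure_gaussMeasure (d : ℕ) (σ : ℝ) :
    IsProbabilityMeasure (gaussMeasure d σ) :=
  Measure.isProbabilityMeasure_map (MeasurableEquiv.toLp 2 (Fin d → ℝ)).measurable.aemeasurable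

lemma norm_toLp_sq {ι : Type*} [Fintype ι] (y : ι → ℝ) :
    ‖MeasurableEquiv.toLp 2 (ι → ℝ) y‖ ^ 2 = ∑ i, y i ^ 2 := by
  simp [EuclideanSpace.norm_sq_eq]

lemma integrable_norm_sq_gaussMeasure (d : ℕ) (σ : ℝ) :
    Integrable (fun z => ‖z‖ ^ 2) (gaussMeasure d σ) := by
  rw [gaussMeasure, integrable_map_equiv]
  simp only [Function.comp_def, norm_toLp_sq]
  exact integrable_finsetSum _ fun i _ => integrable_eval_sq_pi_gaussianReal _ i

lemma integral_norm_sq_gaussMeasure (d : ℕ) (σ : ℝ) :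
    ∫ z, ‖z‖ ^ 2 ∂gaussMeasure d σ = d * σ ^ 2 := by
  rw [gaussMeasure, integral_map_equiv]
  simp only [norm_toLp_sq]
  rw [integral_finsetSum _ fun i _ => integrable_eval_sq_pi_gaussianReal _ i]
  simp [integral_eval_sq_pi_gaussianReal, Real.coe_toNNReal _ (sq_nonneg σ)]

lemma memLp_norm_gaussMeasure (d : ℕ) (σ : ℝ) :
    MemLp (fun z => ‖z‖) 2 (gaussMeasure d σ) :=
  (memLp_two_iff_integrable_sq (by fun_prop)).mpr (integrable_norm_sq_gaussMeasure d σ)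

lemma integral_norm_gaussMeasure_le (d : ℕ) {σ : ℝ} (hσ : 0 ≤ σ) :
    ∫ z, ‖z‖ ∂gaussMeasure d σ ≤ σ * √d :=
  calc ∫ z, ‖z‖ ∂gaussMeasure d σ ≤ √(d * σ ^ 2) := by
        rw [← integral_norm_sq_gaussMeasure]
        exact integral_le_sqrt_integral_sq (memLp_norm_gaussMeasure d σ)
    _ = σ * √d := by rw [Real.sqrt_mul' _ (sq_nonneg σ), Real.sqrt_sq hσ, mul_comm]

theorem gaussian_smoothing_close_to_population_general
    {d : ℕ} (F : EuclideanSpace ℝ (Fin d) → ℝ) (hF : Measurable F)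
    (K : Set (EuclideanSpace ℝ (Fin d)))
    (B G ρ σ : ℝ) (hρ : 0 < ρ) (hσ : 0 < σ)
    (hrange : ∀ x, F x ∈ Set.Icc 0 B)
    (hLip : ∀ x y : EuclideanSpace ℝ (Fin d),
      Metric.infDist x K ≤ ρ → Metric.infDist y K ≤ ρ →
      |F x - F y| ≤ G * ‖x - y‖) :
    ∀ x ∈ K,
      |(∫ z, F (x + z) ∂(gaussMeasure d σ)) - F x|
        ≤ max G (B / ρ) * σ * Real.sqrt d := by
  intro x hx
  have hbound (y) : |F y - F x| ≤ B :=
    abs_sub_le_of_nonneg_of_le (hrange y).1 (hrange y).2 (hrange x).1 (hrange x).2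
  have hxρ : infDist x K ≤ ρ := (infDist_zero_of_mem hx).trans_le hρ.le
  have hshift (z) : |F (x + z) - F x| ≤ max G (B / ρ) * ‖z‖ := by
    simpa using abs_sub_le_max_mul_dist hx hρ hbound
      (fun y hy => (hLip y x hy hxρ).trans_eq (by rw [dist_eq_norm])) (x + z)
  have hM : 0 ≤ max G (B / ρ) := (div_nonneg ((abs_nonneg _).trans (hbound x)) hρ.le).trans
    (le_max_right _ _)
  have hFint : Integrable (fun z => F (x + z)) (gaussMeasure d σ) :=
    .of_bound (hF.comp (measurable_const_add x)).aestronglyMeasurable B (ae_of_all _ fun z => by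
      simpa [abs_of_nonneg (hrange (x + z)).1] using (hrange (x + z)).2)
  calc |(∫ z, F (x + z) ∂(gaussMeasure d σ)) - F x|
      ≤ ∫ z, max G (B / ρ) * ‖z‖ ∂(gaussMeasure d σ) :=
        abs_integral_sub_le_integral_of_abs_sub_le hFint
          ((memLp_norm_gaussMeasure d σ).integrable one_le_two |>.const_mul _) hshift
    _ = max G (B / ρ) * ∫ z, ‖z‖ ∂(gaussMeasure d σ) := integral_const_mul _ _
    _ ≤ max G (B / ρ) * σ * √d := by
        rw [mul_assoc]; gcongr; exact integral_norm_gaussMeasure_le d hσ.le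

theorem gaussian_smoothing_close_to_population
    {d : ℕ} (F : EuclideanSpace ℝ (Fin d) → ℝ) (hF : Measurable F)
    (K : Set (EuclideanSpace ℝ (Fin d)))
    (B G ρ σ : ℝ) (hB : 0 < B) (hG : 0 < G) (hρ : 0 < ρ) (hσ : 0 < σ)
    (hrange : ∀ x, F x ∈ Set.Icc 0 B)
    (hLip : ∀ x y : EuclideanSpace ℝ (Fin d),
      Metric.infDist x K ≤ ρ → Metric.infDist y K ≤ ρ →
      |F x - F y| ≤ G * ‖x - y‖) :
    ∀ x ∈ K,
      |(∫ z, F (x + z) ∂(gaussMeasure d σ)) - F x|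
        ≤ max G (B / ρ) * σ * Real.sqrt d :=
  gaussian_smoothing_close_to_population_general F hF K B G ρ σ hρ hσ hrange hLip
end

section
/- Let X follow the chi-square distribution with d degrees of freedom. Then for every x > 0, P(X ≥ d(1 + 2√x + 2x)) ≤ e^{−x d} and P(X ≤ d(1 − 2√x)) ≤ e^{−x d}. -/
/-!
Chernoff's method. For `t < 1/2` the moment generating function of `Z²`, `Z` standard normal, is
`(1 - 2t)^{-1/2}`, so `P(X ≥ d c) ≤ exp(-d (t c + log(1 - 2t) / 2))` for `0 ≤ t`, and likewise for
the lower tail with `t ≤ 0`. Put `s = √x`. For the upper tail, `c = 1 + 2s + 2s²` and the optimal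
`t = (1 - 1/c) / 2` give the rate `(c - 1 - log c) / 2`, which is at least `s²` because
`c ≤ exp (2s)`. For the lower tail, `c = 1 - 2s` and `t = -s` give the rate
`2s² - s + log(1 + 2s) / 2`, which is at least `s²` because `log(1 + 2s) ≥ 2s - 2s²`.
-/

open MeasureTheory ProbabilityTheory Real

lemma gaussianPDFReal_zero_one_mul_exp_mul_sq (t z : ℝ) :
    gaussianPDFReal 0 1 z * exp (t * z ^ 2) = (√(2 * π))⁻¹ * exp (-(1 / 2 - t) * z ^ 2) := by
  rw [gaussianPDFReal, mul_assoc, ← exp_add]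
  simp only [NNReal.coe_one, mul_one, sub_zero]
  congr 2
  ring

lemma mgf_sq_gaussianReal {t : ℝ} (ht : t < 1 / 2) :
    mgf (fun z => z ^ 2) (gaussianReal 0 1) t = (1 - 2 * t) ^ (-(1 / 2 : ℝ)) := by
  have hb : 0 < 1 / 2 - t := by linarith
  rw [mgf, integral_gaussianReal_eq_integral_smul one_ne_zero]
  simp only [smul_eq_mul, gaussianPDFReal_zero_one_mul_exp_mul_sq]
  rw [integral_const_mul, integral_gaussian, rpow_neg (by linarith), ← sqrt_eq_rpow,
    ← sqrt_inv, ← sqrt_inv, ← sqrt_mul (by positivity)]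
  congr 1
  field_simp

section

variable {ι : Type*} [Fintype ι]

lemma mgf_sum_sq_pi_gaussianReal {t : ℝ} (ht : t < 1 / 2) :
    mgf (fun z : ι → ℝ => ∑ i, z i ^ 2) (Measure.pi fun _ => gaussianReal 0 1) t
      = (1 - 2 * t) ^ (-(Fintype.card ι / 2 : ℝ)) := by
  have hprod : ∀ z : ι → ℝ, exp (t * ∑ i, z i ^ 2) = ∏ i, exp (t * z i ^ 2) := by
    intro z
    rw [Finset.mul_sum, exp_sum]
  have hcoord : ∫ z, exp (t * z ^ 2) ∂gaussianReal 0 1 = (1 - 2 * t) ^ (-(1 / 2 : ℝ)) :=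
    mgf_sq_gaussianReal ht
  simp only [mgf, hprod]
  rw [integral_fintype_prod_eq_prod (fun _ z => exp (t * z ^ 2)), hcoord, Finset.prod_const,
    Finset.card_univ, ← rpow_mul_natCast (by linarith)]
  ring_nf

lemma integrable_exp_mul_sum_sq_pi_gaussianReal {t : ℝ} (ht : t < 1 / 2) :
    Integrable (fun z : ι → ℝ => exp (t * ∑ i, z i ^ 2))
      (Measure.pi fun _ => gaussianReal 0 1) := by
  rw [← mgf_pos_iff, mgf_sum_sq_pi_gaussianReal ht]
  exact rpow_pos_of_pos (by linarith) _

lemma exp_mul_mgf_sum_sq_pi_gaussianReal {t : ℝ} (ht : t < 1 / 2) (c : ℝ) :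
    exp (-t * (Fintype.card ι * c))
        * mgf (fun z : ι → ℝ => ∑ i, z i ^ 2) (Measure.pi fun _ => gaussianReal 0 1) t
      = exp (-((t * c + log (1 - 2 * t) / 2) * Fintype.card ι)) := by
  rw [mgf_sum_sq_pi_gaussianReal ht, rpow_def_of_pos (by linarith), ← exp_add]
  ring_nf

lemma exp_le_exp_of_le_chernoff_rate {t c r : ℝ} (hr : r ≤ t * c + log (1 - 2 * t) / 2) :
    exp (-((t * c + log (1 - 2 * t) / 2) * Fintype.card ι)) ≤ exp (-(r * Fintype.card ι)) :=
  exp_le_exp.2 (neg_le_neg (mul_le_mul_of_nonneg_right hr (Nat.cast_nonneg _)))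

lemma pi_gaussianReal_sum_sq_ge_le {t c r : ℝ} (ht₀ : 0 ≤ t) (ht : t < 1 / 2)
    (hr : r ≤ t * c + log (1 - 2 * t) / 2) :
    (Measure.pi fun _ : ι => gaussianReal 0 1) {z | Fintype.card ι * c ≤ ∑ i, z i ^ 2}
      ≤ ENNReal.ofReal (exp (-(r * Fintype.card ι))) := by
  rw [← ofReal_measureReal]
  refine ENNReal.ofReal_le_ofReal (le_trans ?_ (exp_le_exp_of_le_chernoff_rate hr))
  rw [← exp_mul_mgf_sum_sq_pi_gaussianReal ht]
  exact measure_ge_le_exp_mul_mgf _ ht₀ (integrable_exp_mul_sum_sq_pi_gaussianReal ht)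

lemma pi_gaussianReal_sum_sq_le_le {t c r : ℝ} (ht : t ≤ 0)
    (hr : r ≤ t * c + log (1 - 2 * t) / 2) :
    (Measure.pi fun _ : ι => gaussianReal 0 1) {z | ∑ i, z i ^ 2 ≤ Fintype.card ι * c}
      ≤ ENNReal.ofReal (exp (-(r * Fintype.card ι))) := by
  have ht' : t < 1 / 2 := by linarith
  rw [← ofReal_measureReal]
  refine ENNReal.ofReal_le_ofReal (le_trans ?_ (exp_le_exp_of_le_chernoff_rate hr))
  rw [← exp_mul_mgf_sum_sq_pi_gaussianReal ht']
  exact measure_le_le_exp_mul_mgf _ ht (integrable_exp_mul_sum_sq_pi_gaussianReal ht')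

end

theorem chi_square_laurent_massart (d : ℕ) (x : ℝ) (hx : 0 < x) :
    (Measure.pi fun _ : Fin d => gaussianReal 0 1)
        {z : Fin d → ℝ | (d : ℝ) * (1 + 2 * Real.sqrt x + 2 * x) ≤ ∑ i, z i ^ 2}
      ≤ ENNReal.ofReal (Real.exp (-(x * d))) ∧
    (Measure.pi fun _ : Fin d => gaussianReal 0 1)
        {z : Fin d → ℝ | ∑ i, z i ^ 2 ≤ (d : ℝ) * (1 - 2 * Real.sqrt x)}
      ≤ ENNReal.ofReal (Real.exp (-(x * d))) := by
  set s := √x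
  have hs : 0 ≤ s := sqrt_nonneg x
  have hxs : x = s ^ 2 := (sq_sqrt hx.le).symm
  constructor
  · set c := 1 + 2 * s + 2 * x
    have hc : 1 ≤ c := by nlinarith
    have hlog_c : log c ≤ 2 * s := by
      rw [log_le_iff_le_exp (by linarith)]
      nlinarith [quadratic_le_exp_of_nonneg (by positivity : 0 ≤ 2 * s)]
    have hrate : x ≤ (1 - c⁻¹) / 2 * c + log (1 - 2 * ((1 - c⁻¹) / 2)) / 2 := by
      rw [show 1 - 2 * ((1 - c⁻¹) / 2) = c⁻¹ by ring, log_inv]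
      field_simp
      nlinarith
    simpa only [Fintype.card_fin] using pi_gaussianReal_sum_sq_ge_le (ι := Fin d)
      (by linarith [inv_le_one_of_one_le₀ hc]) (by linarith [inv_pos.2 (by linarith : 0 < c)])
      hrate
  · have hlog : 2 * s - 2 * s ^ 2 ≤ log (1 + 2 * s) :=
      calc 2 * s - 2 * s ^ 2 ≤ 2 * (2 * s) / (2 * s + 2) := by
            rw [le_div_iff₀ (by positivity)]; nlinarith
        _ ≤ log (1 + 2 * s) := le_log_one_add_of_nonneg (by positivity)
    have hrate : x ≤ -s * (1 - 2 * s) + log (1 - 2 * -s) / 2 := by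
      rw [show 1 - 2 * -s = 1 + 2 * s by ring]
      nlinarith
    simpa only [Fintype.card_fin] using
      pi_gaussianReal_sum_sq_le_le (ι := Fin d) (by linarith : -s ≤ 0) hrate
end
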